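/- Let G be a finite simple connected block graph (every block of G is a complete graph) with exactly ℓ blocks. Then the Radon number of G with respect to Δ-convexity satisfies r_Δ(G) = ℓ + 1. -/

import Mathlib

variable {V : Type*}

/-- A set `S` is Δ-convex in `G` if every vertex adjacent to two adjacent vertices of `S`
belongs to `S`. -/
def DeltaConvex (G : SimpleGraph V) (S : Set V) : Prop :=
  ∀ ⦃u v w : V⦄, u ∈ S → v ∈ S → G.Adj u v → G.Adj w u → G.Adj w v → w ∈ S

/-- The Δ-convex hull of `S`: the smallest Δ-convex set containing `S`. -/
def deltaHull (G : SimpleGraph V) (S : Set V) : Set V :=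
  ⋂₀ {T : Set V | S ⊆ T ∧ DeltaConvex G T}

/-- `S` is Helly independent: the intersection of the hulls of the sets `S \ {a}`, `a ∈ S`,
is empty. -/
def HellyIndep (G : SimpleGraph V) (S : Set V) : Prop :=
  (⋂ a ∈ S, deltaHull G (S \ {a})) = ∅

/-- The Helly number of `G` w.r.t. Δ-convexity: the maximum cardinality of a Helly
independent subset of the vertex set. -/
noncomputable def hellyNumber (G : SimpleGraph V) : ℕ :=
  sSup {n : ℕ | ∃ S : Set V, HellyIndep G S ∧ S.ncard = n}

/-- `S` is Radon independent: no partition of `S` into two nonempty disjoint parts has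
intersecting hulls. -/
def RadonIndep (G : SimpleGraph V) (S : Set V) : Prop :=
  ¬ ∃ S₁ S₂ : Set V, S₁ ∪ S₂ = S ∧ Disjoint S₁ S₂ ∧ S₁.Nonempty ∧ S₂.Nonempty ∧
    (deltaHull G S₁ ∩ deltaHull G S₂).Nonempty

/-- The Radon number of `G` w.r.t. Δ-convexity. -/
noncomputable def radonNumber (G : SimpleGraph V) : ℕ :=
  sSup {n : ℕ | ∃ S : Set V, RadonIndep G S ∧ S.ncard = n}

/-- `S` is convexly independent: `a ∉ ⟨S \ {a}⟩` for every `a ∈ S`. -/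
def ConvIndep (G : SimpleGraph V) (S : Set V) : Prop :=
  ∀ a ∈ S, a ∉ deltaHull G (S \ {a})

/-- The rank of `G` w.r.t. Δ-convexity. -/
noncomputable def rankDelta (G : SimpleGraph V) : ℕ :=
  sSup {n : ℕ | ∃ S : Set V, ConvIndep G S ∧ S.ncard = n}

/-- The independence number: maximum cardinality of a set of pairwise non-adjacent
vertices. -/
noncomputable def alphaNum (G : SimpleGraph V) : ℕ :=
  sSup {n : ℕ | ∃ S : Set V, S.Pairwise (fun a b => ¬ G.Adj a b) ∧ S.ncard = n}

/-- `G` is 2-connected: at least 3 vertices, connected, and deleting any single vertex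
leaves a connected graph. -/
def TwoConnected (G : SimpleGraph V) : Prop :=
  3 ≤ Nat.card V ∧ G.Connected ∧ ∀ v : V, (G.induce {u : V | u ≠ v}).Connected

/-- `G` is chordal: every cycle of length at least 4 has a chord, i.e. an edge of `G`
joining two vertices of the cycle that is not an edge of the cycle. -/
def ChordalGraph (G : SimpleGraph V) : Prop :=
  ∀ (v : V) (c : G.Walk v v), c.IsCycle → 4 ≤ c.length →
    ∃ x y : V, x ∈ c.support ∧ y ∈ c.support ∧ G.Adj x y ∧ s(x, y) ∉ c.edges

/-- `B` induces a connected subgraph of `G` with at least two vertices and no cut vertex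
(so: an edge, or a 2-connected subgraph). -/
def NoCutSet (G : SimpleGraph V) (B : Set V) : Prop :=
  2 ≤ B.ncard ∧ (G.induce B).Connected ∧ ∀ v ∈ B, (G.induce (B \ {v})).Connected

/-- `B` is (the vertex set of) a block of `G`: a maximal 2-connected subgraph, where a
bridge together with its endpoints also counts as a block. -/
def IsBlock (G : SimpleGraph V) (B : Set V) : Prop :=
  NoCutSet G B ∧ ∀ B' : Set V, NoCutSet G B' → B ⊆ B' → B = B'

/-- The set `B` induces a complete subgraph of `G`. -/
def CompleteOn (G : SimpleGraph V) (B : Set V) : Prop :=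
  ∀ u ∈ B, ∀ v ∈ B, u ≠ v → G.Adj u v


/-!
Induct on a Δ-convex set `D` inducing a connected subgraph: its Radon independent subsets have
at most `ℓ_D + 1` points, with equality attained, where `ℓ_D` counts the blocks inside `D`.
If `D` contains a block, it contains a leaf block `B`, meeting the rest of `D` only in a vertex
`c`: take a block minimising the set of vertices reachable from `B \ {c}` inside `D` while
avoiding `c`. This rests on the fact that a walk from outside a block enters it through a single
vertex, since a path outside `B` joining two of its vertices could be added to `B` without
creating a cut vertex. Removing `B \ {c}` leaves a set of the same kind with one block fewer.

A Radon independent subset of `D` meets the clique `B \ {c}` in at most two points, and if in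
two points `a, b`, then `c` lies in their hull and can replace them: independent sets gain at
most one point. Conversely, a point `a ∈ B \ {c}` added to an independent subset of
`D \ (B \ {c})` enlarges no hull inside `D \ (B \ {c})`, so independence is kept.
-/

section Hull

variable {G : SimpleGraph V} {S T : Set V}

theorem subset_deltaHull (S : Set V) : S ⊆ deltaHull G S :=
  fun _ hx _ hT => hT.1 hx

theorem deltaConvex_deltaHull (S : Set V) : DeltaConvex G (deltaHull G S) :=
  fun _ _ _ hu hv huv hwu hwv T hT => hT.2 (hu T hT) (hv T hT) huv hwu hwv

theorem deltaHull_subset (hST : S ⊆ T) (hT : DeltaConvex G T) : deltaHull G S ⊆ T :=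
  fun _ hx => hx T ⟨hST, hT⟩

theorem deltaHull_mono (hST : S ⊆ T) : deltaHull G S ⊆ deltaHull G T :=
  deltaHull_subset (hST.trans (subset_deltaHull T)) (deltaConvex_deltaHull T)

@[simp]
theorem deltaHull_empty : deltaHull G (∅ : Set V) = ∅ :=
  Set.subset_empty_iff.mp (deltaHull_subset subset_rfl fun _ _ _ hu => hu.elim)

theorem mem_deltaHull_pair {x y z : V} (hxy : G.Adj x y) (hzx : G.Adj z x) (hzy : G.Adj z y) :
    z ∈ deltaHull G {x, y} :=
  deltaConvex_deltaHull _ (subset_deltaHull _ (Set.mem_insert x _))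
    (subset_deltaHull _ (Set.mem_insert_of_mem x rfl)) hxy hzx hzy

end Hull

section Radon

variable {G : SimpleGraph V} {S T : Set V}

theorem radonIndep_iff : RadonIndep G S ↔ ∀ S₁ S₂ : Set V, S₁ ∪ S₂ = S → Disjoint S₁ S₂ →
    Disjoint (deltaHull G S₁) (deltaHull G S₂) := by
  simp only [RadonIndep, not_exists, not_and, ← Set.not_disjoint_iff_nonempty_inter, not_not]
  refine ⟨fun h S₁ S₂ hS hdis => ?_, fun h S₁ S₂ hS hdis _ _ => h S₁ S₂ hS hdis⟩
  rcases S₁.eq_empty_or_nonempty with rfl | hS₁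
  · simp
  rcases S₂.eq_empty_or_nonempty with rfl | hS₂
  · simp
  exact h S₁ S₂ hS hdis hS₁ hS₂

theorem RadonIndep.disjoint (hS : RadonIndep G S) {S₁ S₂ : Set V} (hS₁₂ : S₁ ∪ S₂ = S)
    (hdis : Disjoint S₁ S₂) : Disjoint (deltaHull G S₁) (deltaHull G S₂) :=
  radonIndep_iff.mp hS S₁ S₂ hS₁₂ hdis

theorem radonIndep_of_forall_mem {a : V} (ha : a ∈ S)
    (h : ∀ S₁ S₂ : Set V, S₁ ∪ S₂ = S → Disjoint S₁ S₂ → a ∈ S₁ →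
      Disjoint (deltaHull G S₁) (deltaHull G S₂)) : RadonIndep G S := by
  refine radonIndep_iff.mpr fun S₁ S₂ hS hdis => ?_
  rcases (hS ▸ ha : a ∈ S₁ ∪ S₂) with h₁ | h₂
  · exact h S₁ S₂ hS hdis h₁
  · exact (h S₂ S₁ (Set.union_comm _ _ ▸ hS) hdis.symm h₂).symm

theorem RadonIndep.mono (hS : RadonIndep G S) (hTS : T ⊆ S) : RadonIndep G T := by
  refine radonIndep_iff.mpr fun T₁ T₂ hT hdis => ?_
  have hpart : T₁ ∪ (S \ T) ∪ T₂ = S := by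
    rw [Set.union_right_comm, hT, Set.union_sdiff_cancel hTS]
  have hdis' : Disjoint (T₁ ∪ (S \ T)) T₂ :=
    Disjoint.union_left hdis (Set.disjoint_sdiff_left.mono_right (hT ▸ Set.subset_union_right))
  exact (hS.disjoint hpart hdis').mono_left (deltaHull_mono Set.subset_union_left)

theorem RadonIndep.notMem_deltaHull (hS : RadonIndep G S) (hTS : T ⊆ S) {z : V} (hz : z ∈ S)
    (hzT : z ∉ T) : z ∉ deltaHull G T :=
  Set.disjoint_right.mp (hS.disjoint (Set.union_sdiff_cancel hTS) Set.disjoint_sdiff_right)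
    (subset_deltaHull _ ⟨hz, hzT⟩)

theorem radonIndep_singleton (v : V) : RadonIndep G {v} := by
  refine radonIndep_of_forall_mem rfl fun S₁ S₂ hS hdis hv => ?_
  have : S₂ = ∅ := Set.eq_empty_of_forall_notMem fun x hx =>
    Set.disjoint_left.mp hdis ((hS ▸ Set.mem_union_right S₁ hx : x ∈ ({v} : Set V)) ▸ hv) hx
  simp [this]

theorem RadonIndep.insert_diff_pair (hS : RadonIndep G S) {a b c : V} (ha : a ∈ S) (hb : b ∈ S)
    (hc : c ∉ S) (hcab : c ∈ deltaHull G {a, b}) : RadonIndep G (insert c (S \ {a, b})) := by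
  refine radonIndep_of_forall_mem (Set.mem_insert c _) fun P₁ P₂ hP hdis hcP => ?_
  have hP₂ : P₂ ⊆ S \ {a, b} := fun x hx => by
    rcases (hP ▸ Set.mem_union_right P₁ hx : x ∈ insert c (S \ {a, b})) with rfl | h
    · exact absurd hcP (Set.disjoint_right.mp hdis hx)
    · exact h
  have hpart : (P₁ \ {c}) ∪ {a, b} ∪ P₂ = S := by
    apply subset_antisymm
    · refine Set.union_subset (Set.union_subset (fun x hx => ?_) ?_) (hP₂.trans Set.sdiff_subset)
      · rcases (hP ▸ Set.mem_union_left P₂ hx.1 : x ∈ insert c (S \ {a, b})) with h | h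
        · exact absurd h hx.2
        · exact h.1
      · exact Set.insert_subset ha (Set.singleton_subset_iff.mpr hb)
    · intro x hx
      by_cases hxab : x ∈ ({a, b} : Set V)
      · exact Or.inl (Or.inr hxab)
      rcases (hP.symm ▸ Set.mem_insert_of_mem c ⟨hx, hxab⟩ : x ∈ P₁ ∪ P₂) with h | h
      · exact Or.inl (Or.inl ⟨h, fun hxc => hc (hxc ▸ hx)⟩)
      · exact Or.inr h
  have hdis' : Disjoint ((P₁ \ {c}) ∪ {a, b}) P₂ :=
    Disjoint.union_left (hdis.mono_left Set.sdiff_subset)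
      (Set.disjoint_left.mpr fun x hx hx₂ => (hP₂ hx₂).2 hx)
  have hP₁ : P₁ ⊆ deltaHull G ((P₁ \ {c}) ∪ {a, b}) := fun x hx => by
    by_cases hxc : x = c
    · exact hxc.symm ▸ deltaHull_mono Set.subset_union_right hcab
    · exact subset_deltaHull _ (Or.inl ⟨hx, hxc⟩)
  exact (hS.disjoint hpart hdis').mono_left
    (deltaHull_subset hP₁ (deltaConvex_deltaHull _))

theorem RadonIndep.insert_of_deltaHull_inter {E : Set V} (hS : RadonIndep G S) (hSE : S ⊆ E)
    (hE : DeltaConvex G E) {a : V} (ha : a ∉ E)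
    (hhull : ∀ T ⊆ E, deltaHull G (insert a T) ∩ E ⊆ deltaHull G T) :
    RadonIndep G (insert a S) := by
  refine radonIndep_of_forall_mem (Set.mem_insert a S) fun S₁ S₂ hS₁₂ hdis haS₁ => ?_
  have hS₂ : S₂ ⊆ S := fun x hx => by
    rcases (hS₁₂ ▸ Set.mem_union_right S₁ hx : x ∈ insert a S) with rfl | h
    · exact absurd haS₁ (Set.disjoint_right.mp hdis hx)
    · exact h
  have hT₁ : S₁ \ {a} ⊆ S := fun x hx => by
    rcases (hS₁₂ ▸ Set.mem_union_left S₂ hx.1 : x ∈ insert a S) with h | h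
    · exact absurd h hx.2
    · exact h
  have hpart : S₁ \ {a} ∪ S₂ = S := by
    refine subset_antisymm (Set.union_subset hT₁ hS₂) fun x hx => ?_
    rcases (hS₁₂.symm ▸ Set.mem_insert_of_mem a hx : x ∈ S₁ ∪ S₂) with h | h
    · exact Or.inl ⟨h, fun hxa => ha (hxa ▸ hSE hx)⟩
    · exact Or.inr h
  refine Set.disjoint_left.mpr fun z hz₁ hz₂ => ?_
  have hzE : z ∈ E := deltaHull_subset (hS₂.trans hSE) hE hz₂
  rw [← Set.insert_eq_of_mem haS₁, ← Set.insert_sdiff_singleton] at hz₁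
  exact Set.disjoint_left.mp (hS.disjoint hpart (hdis.mono_left Set.sdiff_subset))
    (hhull _ (hT₁.trans hSE) ⟨hz₁, hzE⟩) hz₂

end Radon

section Blocks

open SimpleGraph

variable {G : SimpleGraph V} {B S : Set V}

theorem NoCutSet.finite (h : NoCutSet G B) : B.Finite :=
  Set.finite_of_ncard_pos (by have := h.1; omega)

theorem NoCutSet.connected_induce_sdiff (h : NoCutSet G B) (v : V) :
    (G.induce (B \ {v})).Connected := by
  by_cases hv : v ∈ B
  · exact h.2.2 v hv
  · rw [Set.sdiff_singleton_eq_self hv]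
    exact h.2.1

theorem CompleteOn.connected_induce (hB : CompleteOn G B) (hne : B.Nonempty) :
    (G.induce B).Connected := by
  have := hne.to_subtype
  refine Connected.mk fun x y => ?_
  by_cases hxy : x = y
  · exact hxy ▸ Reachable.refl x
  · exact Adj.reachable (hB x x.2 y y.2 (Subtype.coe_ne_coe.mpr hxy))

theorem CompleteOn.noCutSet (hB : CompleteOn G B) (h2 : 2 ≤ B.ncard) : NoCutSet G B := by
  refine ⟨h2, hB.connected_induce (Set.nonempty_of_ncard_ne_zero (by omega)), fun v hv => ?_⟩
  refine CompleteOn.connected_induce (fun x hx y hy hxy => hB x hx.1 y hy.1 hxy)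
    (Set.nonempty_of_ncard_ne_zero ?_)
  rw [Set.ncard_sdiff_singleton_of_mem hv]
  omega

theorem completeOn_pair {u v : V} (h : G.Adj u v) : CompleteOn G {u, v} := by
  rintro a (rfl | rfl) b (rfl | rfl) hab
  exacts [absurd rfl hab, h, h.symm, absurd rfl hab]

theorem CompleteOn.subset_of_deltaConvex (hB : CompleteOn G B) {T : Set V}
    (hT : DeltaConvex G T) {x y : V} (hx : x ∈ B) (hy : y ∈ B) (hxy : x ≠ y) (hxT : x ∈ T)
    (hyT : y ∈ T) : B ⊆ T := by
  intro w hw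
  by_cases hwx : w = x
  · exact hwx ▸ hxT
  by_cases hwy : w = y
  · exact hwy ▸ hyT
  exact hT hxT hyT (hB x hx y hy hxy) (hB w hw x hx hwx) (hB w hw y hy hwy)

theorem exists_isBlock_superset [Finite V] (hS : NoCutSet G S) : ∃ B, IsBlock G B ∧ S ⊆ B := by
  obtain ⟨B, hSB, hB⟩ := Finite.exists_le_maximal hS
  exact ⟨B, ⟨hB.prop, fun B' hB' hBB' => hBB'.antisymm (hB.2 hB' hBB')⟩, hSB⟩

theorem exists_isBlock_of_adj [Finite V] {u v : V} (h : G.Adj u v) :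
    ∃ B, IsBlock G B ∧ u ∈ B ∧ v ∈ B := by
  obtain ⟨B, hB, hsub⟩ :=
    exists_isBlock_superset ((completeOn_pair h).noCutSet (Set.ncard_pair h.ne).ge)
  exact ⟨B, hB, hsub (Set.mem_insert u _), hsub (Set.mem_insert_of_mem u rfl)⟩

theorem IsBlock.exists_ne (hB : IsBlock G B) (c : V) : ∃ a ∈ B, a ≠ c :=
  Set.exists_ne_of_one_lt_ncard (by have := hB.1.1; omega) c

theorem IsBlock.eq_of_mem {B₁ B₂ : Set V} (h₁ : IsBlock G B₁) (h₂ : IsBlock G B₂) {x y : V}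
    (hx₁ : x ∈ B₁) (hx₂ : x ∈ B₂) (hy₁ : y ∈ B₁) (hy₂ : y ∈ B₂) (hxy : x ≠ y) : B₁ = B₂ := by
  have hU : NoCutSet G (B₁ ∪ B₂) := by
    refine ⟨h₁.1.1.trans (Set.ncard_le_ncard Set.subset_union_left
      (h₁.1.finite.union h₂.1.finite)),
      induce_union_connected h₁.1.2.1.preconnected h₂.1.2.1.preconnected ⟨x, hx₁, hx₂⟩,
      fun v _ => ?_⟩
    rw [Set.union_sdiff_distrib]
    refine induce_union_connected (h₁.1.connected_induce_sdiff v).preconnected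
      (h₂.1.connected_induce_sdiff v).preconnected ?_
    by_cases hxv : x = v
    · exact ⟨y, ⟨hy₁, fun h => hxy (hxv.trans h.symm)⟩, hy₂, fun h => hxy (hxv.trans h.symm)⟩
    · exact ⟨x, ⟨hx₁, hxv⟩, hx₂, hxv⟩
  exact (h₁.2 _ hU Set.subset_union_left).trans (h₂.2 _ hU Set.subset_union_right).symm

theorem connected_induce_union_of_adj {s t : Set V} (hs : (G.induce s).Connected) {x y : V}
    (hx : x ∈ s) (hxy : G.Adj x y) (ht : t = ∅ ∨ y ∈ t ∧ (G.induce t).Connected) :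
    (G.induce (s ∪ t)).Connected := by
  rcases ht with rfl | ⟨hy, ht⟩
  · rwa [Set.union_empty]
  · exact connected_induce_union hs.preconnected ht.preconnected hx hy hxy

theorem SimpleGraph.Walk.IsPath.support_sdiff_start {a b : V} {p : G.Walk a b} (hp : p.IsPath) :
    {y | y ∈ p.support} \ {a} = ∅ ∨
      b ∈ {y | y ∈ p.support} \ {a} ∧ (G.induce ({y | y ∈ p.support} \ {a})).Connected := by
  cases p with
  | nil => simp
  | cons h q =>
    have ha : a ∉ q.support := (cons_isPath_iff h q).mp hp |>.2
    have : {y | y ∈ (cons h q).support} \ {a} = {y | y ∈ q.support} := by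
      ext y
      simp only [support_cons, List.mem_cons, Set.mem_sdiff, Set.mem_ofPred_eq,
        Set.mem_singleton_iff]
      exact ⟨fun h => h.1.resolve_left h.2, fun hy => ⟨Or.inr hy, fun h => ha (h ▸ hy)⟩⟩
    rw [this]
    exact Or.inr ⟨q.end_mem_support, q.connected_induce_support⟩

theorem SimpleGraph.Walk.IsPath.support_sdiff_end {a b : V} {p : G.Walk a b} (hp : p.IsPath) :
    {y | y ∈ p.support} \ {b} = ∅ ∨
      a ∈ {y | y ∈ p.support} \ {b} ∧ (G.induce ({y | y ∈ p.support} \ {b})).Connected := by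
  have h := hp.reverse.support_sdiff_start
  have hrev : {y | y ∈ p.reverse.support} = {y | y ∈ p.support} := by
    ext
    simp
  rwa [hrev] at h

theorem NoCutSet.union_path (hB : NoCutSet G B) {u₁ u₂ e₁ e₂ : V} {p : G.Walk u₁ u₂}
    (hp : p.IsPath) (hpB : ∀ y ∈ p.support, y ∉ B) (he₁ : e₁ ∈ B) (he₂ : e₂ ∈ B)
    (hne : e₁ ≠ e₂) (h₁ : G.Adj e₁ u₁) (h₂ : G.Adj e₂ u₂) :
    NoCutSet G (B ∪ {y | y ∈ p.support}) := by
  classical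
  refine ⟨hB.1.trans (Set.ncard_le_ncard Set.subset_union_left
      (hB.finite.union p.support.finite_toSet)),
    connected_induce_union hB.2.1.preconnected p.connected_induce_support.preconnected he₁
      p.start_mem_support h₁, fun v hv => ?_⟩
  by_cases hvB : v ∈ B
  · have hvp : v ∉ {y | y ∈ p.support} := fun h => hpB v h hvB
    rw [Set.union_sdiff_distrib, Set.sdiff_singleton_eq_self hvp]
    obtain ⟨e, u, he, hu, hev, heu⟩ : ∃ e u, e ∈ B ∧ u ∈ p.support ∧ e ≠ v ∧ G.Adj e u := by
      by_cases h : e₁ = v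
      · exact ⟨e₂, u₂, he₂, p.end_mem_support, fun h' => hne (h.trans h'.symm), h₂⟩
      · exact ⟨e₁, u₁, he₁, p.start_mem_support, h, h₁⟩
    exact connected_induce_union (hB.connected_induce_sdiff v).preconnected
      p.connected_induce_support.preconnected ⟨he, hev⟩ hu heu
  · have hvp : v ∈ p.support := hv.resolve_left hvB
    have hsupp : ∀ y, y ∈ p.support ↔
        y ∈ (p.takeUntil v hvp).support ∨ y ∈ (p.dropUntil v hvp).support := fun y => by
      rw [← Walk.mem_support_append_iff, p.take_spec hvp]
    have hsplit : (B ∪ {y | y ∈ p.support}) \ {v} =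
        B ∪ ({y | y ∈ (p.takeUntil v hvp).support} \ {v}) ∪
          ({y | y ∈ (p.dropUntil v hvp).support} \ {v}) := by
      ext y
      have : y ∈ B → y ≠ v := fun hy hyv => hvB (hyv ▸ hy)
      simp only [Set.mem_union, Set.mem_sdiff, Set.mem_ofPred_eq, Set.mem_singleton_iff, hsupp]
      tauto
    rw [hsplit]
    exact connected_induce_union_of_adj
      (connected_induce_union_of_adj hB.2.1 he₁ h₁ (hp.takeUntil hvp).support_sdiff_end)
      (Or.inl he₂) h₂ (hp.dropUntil hvp).support_sdiff_start

theorem IsBlock.eq_of_walk (hB : IsBlock G B) {u₁ u₂ e₁ e₂ : V} (p : G.Walk u₁ u₂)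
    (hpB : ∀ y ∈ p.support, y ∉ B) (he₁ : e₁ ∈ B) (he₂ : e₂ ∈ B) (h₁ : G.Adj e₁ u₁)
    (h₂ : G.Adj e₂ u₂) : e₁ = e₂ := by
  classical
  by_contra hne
  have hU := hB.1.union_path p.bypass_isPath
    (fun y hy => hpB y (p.support_bypass_subset_support hy)) he₁ he₂ hne h₁ h₂
  have hu₁ : u₁ ∈ B := by
    rw [hB.2 _ hU Set.subset_union_left]
    exact Or.inr p.bypass.start_mem_support
  exact hpB u₁ p.start_mem_support hu₁

theorem IsBlock.mem_support_of_adj (hB : IsBlock G B) {x z₀ z w : V} (hx : x ∈ B)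
    (hxz : G.Adj x z₀) (q : G.Walk z₀ z) (hq : ∀ y ∈ q.support, y ∉ B) (p : G.Walk z w)
    (hw : w ∈ B) : x ∈ p.support := by
  induction p with
  | nil => exact absurd hw (hq _ q.end_mem_support)
  | @cons a b c hab p ih =>
    by_cases hb : b ∈ B
    · obtain rfl := hB.eq_of_walk q hq hx hb hxz hab.symm
      simp
    · refine List.mem_cons_of_mem _ (ih (q.concat hab) (fun y hy => ?_) hw)
      rw [Walk.support_concat, List.mem_append, List.mem_singleton] at hy
      rcases hy with hy | rfl
      exacts [hq y hy, hb]

end Blocks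

section LeafBlock

open SimpleGraph

variable {G : SimpleGraph V} {D B : Set V} {c : V}

structure IsLeafBlock (G : SimpleGraph V) (D B : Set V) (c : V) : Prop where
  isBlock : IsBlock G B
  subset : B ⊆ D
  mem : c ∈ B
  mem_of_adj : ∀ ⦃x⦄, x ∈ B → x ≠ c → ∀ ⦃y⦄, y ∈ D → G.Adj x y → y ∈ B

def branch (G : SimpleGraph V) (D B : Set V) (c : V) : Set V :=
  {v | ∃ x ∈ B, x ≠ c ∧ ∃ p : G.Walk x v, ∀ y ∈ p.support, y ∈ D ∧ y ≠ c}

/-- A walk from `B' \ {x}` that avoids `x` never reaches `c ∈ B`. -/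
theorem branch_ssubset (hB : IsBlock G B) (hBD : B ⊆ D) (hc : c ∈ B) {B' : Set V}
    (hB' : IsBlock G B') (hB'c : CompleteOn G B') {x y : V} (hx : x ∈ B) (hxc : x ≠ c)
    (hxB' : x ∈ B') (hyB' : y ∈ B') (hy : y ∉ B) : branch G D B' x ⊂ branch G D B c := by
  classical
  refine (Set.ssubset_iff_of_subset ?_).mpr
    ⟨x, ⟨x, hx, hxc, Walk.nil, by simpa using ⟨hBD hx, hxc⟩⟩,
      fun ⟨_, _, _, p, hp⟩ => (hp x p.end_mem_support).2 rfl⟩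
  rintro v ⟨z, hz, hzx, p, hp⟩
  have hxz : G.Adj x z := hB'c x hxB' z hz hzx.symm
  have hzB : z ∉ B := fun hzB => hy (hB'.eq_of_mem hB hxB' hx hz hzB hzx.symm ▸ hyB')
  have hcp : c ∉ p.support := fun hcp =>
    (hp x (p.support_takeUntil_subset_support hcp (hB.mem_support_of_adj hx hxz Walk.nil
      (by simpa using hzB) _ hc))).2 rfl
  refine ⟨x, hx, hxc, Walk.cons hxz p, fun w hw => ?_⟩
  rcases List.mem_cons.mp (Walk.support_cons hxz p ▸ hw) with rfl | hw
  · exact ⟨hBD hx, hxc⟩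
  · exact ⟨(hp w hw).1, fun hwc => hcp (hwc ▸ hw)⟩

theorem exists_isLeafBlock [Finite V] (hbg : ∀ B : Set V, IsBlock G B → CompleteOn G B)
    (hD : DeltaConvex G D) (h : ∃ B, IsBlock G B ∧ B ⊆ D) : ∃ B c, IsLeafBlock G D B c := by
  obtain ⟨B₀, hB₀, hB₀D⟩ := h
  obtain ⟨c₀, hc₀⟩ := hB₀.1.2.1.nonempty
  obtain ⟨⟨B, c⟩, ⟨hB, hBD, hc⟩, hmin⟩ :=
    Set.exists_min_image {q : Set V × V | IsBlock G q.1 ∧ q.1 ⊆ D ∧ q.2 ∈ q.1}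
      (fun q => (branch G D q.1 q.2).ncard) (Set.toFinite _) ⟨(B₀, c₀), hB₀, hB₀D, hc₀⟩
  refine ⟨B, c, hB, hBD, hc, fun x hx hxc y hy hxy => by_contra fun hyB => ?_⟩
  obtain ⟨B', hB', hxB', hyB'⟩ := exists_isBlock_of_adj hxy
  have hB'D : B' ⊆ D := (hbg B' hB').subset_of_deltaConvex hD hxB' hyB' hxy.ne (hBD hx) hy
  exact (hmin (B', x) ⟨hB', hB'D, hxB'⟩).not_gt
    (Set.ncard_lt_ncard (branch_ssubset hB hBD hc hB' (hbg B' hB') hx hxc hxB' hyB' hyB))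

end LeafBlock

section LeafStep

variable {G : SimpleGraph V} {D B : Set V} {c : V}

theorem SimpleGraph.Connected.subset_of_adj_closed {R : Set V} (hD : (G.induce D).Connected)
    (hcD : c ∈ D) (hcR : c ∈ R) (hR : ∀ ⦃v w⦄, v ∈ D → w ∈ D → v ∈ R → G.Adj v w → w ∈ R) :
    D ⊆ R := by
  intro x hx
  obtain ⟨p⟩ := hD.preconnected ⟨c, hcD⟩ ⟨x, hx⟩
  suffices key : ∀ {u v : D} (p : (G.induce D).Walk u v), u.1 ∈ R → v.1 ∈ R from key p hcR
  intro u v p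
  induction p with
  | nil => exact id
  | cons h p ih => exact fun hu => ih (hR (Subtype.prop _) (Subtype.prop _) hu h)

namespace IsLeafBlock

theorem deltaConvex_sdiff (hL : IsLeafBlock G D B c) (hD : DeltaConvex G D) :
    DeltaConvex G (D \ (B \ {c})) := by
  intro u v w hu hv huv hwu hwv
  refine ⟨hD hu.1 hv.1 huv hwu hwv, fun hw => huv.ne ?_⟩
  have hc : ∀ ⦃t⦄, t ∈ D \ (B \ {c}) → G.Adj w t → t = c := fun t ht hwt =>
    by_contra fun htc => ht.2 ⟨hL.mem_of_adj hw.1 hw.2 ht.1 hwt, htc⟩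
  exact (hc hu hwu).trans (hc hv hwv).symm

theorem connected_induce_sdiff (hL : IsLeafBlock G D B c) (hD : (G.induce D).Connected) :
    (G.induce (D \ (B \ {c}))).Connected := by
  have hc : c ∈ D \ (B \ {c}) := ⟨hL.subset hL.mem, fun h => h.2 rfl⟩
  have hDR : D ⊆ {v | v ∈ B \ {c} ∨ ∃ hv : v ∈ D \ (B \ {c}),
      (G.induce (D \ (B \ {c}))).Reachable ⟨c, hc⟩ ⟨v, hv⟩} := by
    refine hD.subset_of_adj_closed hc.1 (Or.inr ⟨hc, .rfl⟩) fun v w _ hw hvR hvw => ?_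
    by_cases hwA : w ∈ B \ {c}
    · exact Or.inl hwA
    refine Or.inr ⟨⟨hw, hwA⟩, ?_⟩
    obtain hvA | ⟨hv, hr⟩ := hvR
    · obtain rfl : w = c := by_contra fun hwc => hwA ⟨hL.mem_of_adj hvA.1 hvA.2 hw hvw, hwc⟩
      exact .rfl
    · exact hr.trans (SimpleGraph.Adj.reachable (G := G.induce _) hvw)
  rw [SimpleGraph.connected_iff_exists_forall_reachable]
  refine ⟨⟨c, hc⟩, fun ⟨v, hv⟩ => ?_⟩
  obtain h | ⟨_, h⟩ := hDR hv.1
  · exact absurd h hv.2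
  · exact h

theorem ncard_sdiff_lt [Finite V] (hL : IsLeafBlock G D B c) :
    (D \ (B \ {c})).ncard < D.ncard := by
  obtain ⟨a, ha, hac⟩ := hL.isBlock.exists_ne c
  exact Set.ncard_lt_ncard (Set.sdiff_ssubset_left_iff.mpr ⟨a, hL.subset ha, ha, hac⟩)

theorem ncard_blocks [Finite V] (hL : IsLeafBlock G D B c)
    (hbg : ∀ C : Set V, IsBlock G C → CompleteOn G C) :
    {C | IsBlock G C ∧ C ⊆ D}.ncard = {C | IsBlock G C ∧ C ⊆ D \ (B \ {c})}.ncard + 1 := by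
  have hsub : ∀ C, IsBlock G C → C ⊆ D → C ≠ B → C ⊆ D \ (B \ {c}) := by
    intro C hC hCD hCB x hx
    refine ⟨hCD hx, fun hxA => hCB ?_⟩
    obtain ⟨y, hy, hyx⟩ := hC.exists_ne x
    exact hC.eq_of_mem hL.isBlock hx hxA.1 hy
      (hL.mem_of_adj hxA.1 hxA.2 (hCD hy) (hbg C hC x hx y hy hyx.symm)) hyx.symm
  have hB : B ∉ {C | IsBlock G C ∧ C ⊆ D \ (B \ {c})} := fun h => by
    obtain ⟨a, ha, hac⟩ := hL.isBlock.exists_ne c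
    exact (h.2 ha).2 ⟨ha, hac⟩
  rw [← Set.ncard_insert_of_notMem hB]
  congr 1
  ext C
  refine ⟨fun ⟨hC, hCD⟩ => ?_, ?_⟩
  · by_cases hCB : C = B
    · exact Or.inl hCB
    · exact Or.inr ⟨hC, hsub C hC hCD hCB⟩
  · rintro (rfl | ⟨hC, hCD⟩)
    · exact ⟨hL.isBlock, hL.subset⟩
    · exact ⟨hC, hCD.trans Set.sdiff_subset⟩

theorem deltaConvex_deltaHull_union (hL : IsLeafBlock G D B c) (hD : DeltaConvex G D)
    {T : Set V} (hT : T ⊆ D) (hcT : c ∈ deltaHull G T) : DeltaConvex G (deltaHull G T ∪ B) := by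
  have hTD : deltaHull G T ∪ B ⊆ D := Set.union_subset (deltaHull_subset hT hD) hL.subset
  have key : ∀ ⦃s t w⦄, s ∈ B → s ∉ deltaHull G T → t ∈ deltaHull G T ∪ B → G.Adj s t →
      G.Adj w s → G.Adj w t → w ∈ deltaHull G T ∪ B := fun s t w hs hsT ht hst hws hwt =>
    Or.inr (hL.mem_of_adj hs (fun h => hsT (h ▸ hcT))
      (hD (hL.subset hs) (hTD ht) hst hws hwt) hws.symm)
  intro u v w hu hv huv hwu hwv
  by_cases huT : u ∈ deltaHull G T
  · by_cases hvT : v ∈ deltaHull G T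
    · exact Or.inl (deltaConvex_deltaHull T huT hvT huv hwu hwv)
    · exact key (hv.resolve_left hvT) hvT hu huv.symm hwv hwu
  · exact key (hu.resolve_left huT) huT hv huv hwu hwv

theorem deltaConvex_deltaHull_union_singleton (hL : IsLeafBlock G D B c) (hD : DeltaConvex G D)
    {a : V} (ha : a ∈ B \ {c}) {T : Set V} (hT : T ⊆ D \ (B \ {c}))
    (hcT : c ∉ deltaHull G T) : DeltaConvex G (deltaHull G T ∪ {a}) := by
  have hTD : deltaHull G T ⊆ D \ (B \ {c}) := deltaHull_subset hT (hL.deltaConvex_sdiff hD)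
  have hna : ∀ ⦃t⦄, t ∈ deltaHull G T → ¬ G.Adj a t := fun t ht hat => by
    obtain rfl : t = c := by_contra fun htc =>
      (hTD ht).2 ⟨hL.mem_of_adj ha.1 ha.2 (hTD ht).1 hat, htc⟩
    exact hcT ht
  rintro u v w (hu | rfl) (hv | rfl) huv hwu hwv
  · exact Or.inl (deltaConvex_deltaHull T hu hv huv hwu hwv)
  · exact absurd huv.symm (hna hu)
  · exact absurd huv (hna hv)
  · exact absurd huv G.irrefl

theorem deltaHull_insert_inter_subset (hL : IsLeafBlock G D B c) (hD : DeltaConvex G D)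
    {a : V} (ha : a ∈ B \ {c}) {T : Set V} (hT : T ⊆ D \ (B \ {c})) :
    deltaHull G (insert a T) ∩ (D \ (B \ {c})) ⊆ deltaHull G T := by
  rintro z ⟨hz, hzD⟩
  by_cases hcT : c ∈ deltaHull G T
  · have hsub : insert a T ⊆ deltaHull G T ∪ B :=
      Set.insert_subset (Or.inr ha.1) ((subset_deltaHull T).trans Set.subset_union_left)
    rcases deltaHull_subset hsub (hL.deltaConvex_deltaHull_union hD
      (hT.trans Set.sdiff_subset) hcT) hz with h | h
    · exact h
    · obtain rfl : z = c := by_contra fun hzc => hzD.2 ⟨h, hzc⟩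
      exact hcT
  · have hsub : insert a T ⊆ deltaHull G T ∪ {a} :=
      Set.insert_subset (Or.inr rfl) ((subset_deltaHull T).trans Set.subset_union_left)
    rcases deltaHull_subset hsub (hL.deltaConvex_deltaHull_union_singleton hD ha hT hcT) hz
      with h | rfl
    · exact h
    · exact absurd ha hzD.2

end IsLeafBlock

end LeafStep

section RadonNumber

variable {G : SimpleGraph V} {D B : Set V} {c : V}

theorem ncard_le_of_radonIndep_of_completeOn [Finite V] (hB : CompleteOn G B) (hc : c ∈ B)
    (hcD : c ∈ D) {m : ℕ} (hm : ∀ S ⊆ D \ (B \ {c}), RadonIndep G S → S.ncard ≤ m + 1)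
    {S : Set V} (hSD : S ⊆ D) (hS : RadonIndep G S) : S.ncard ≤ m + 2 := by
  by_cases h : (S ∩ (B \ {c})).ncard ≤ 1
  · have := hm (S \ (B \ {c})) (Set.sdiff_subset_sdiff_left hSD) (hS.mono Set.sdiff_subset)
    have := Set.ncard_inter_add_ncard_sdiff_eq_ncard S (B \ {c})
    omega
  obtain ⟨a, b, ⟨haS, haB, hac⟩, ⟨hbS, hbB, hbc⟩, hab⟩ :=
    (Set.one_lt_ncard_iff (s := S ∩ (B \ {c}))).mp (by omega)
  have hpair : {a, b} ⊆ S := Set.insert_subset haS (Set.singleton_subset_iff.mpr hbS)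
  have hab' : G.Adj a b := hB a haB b hbB hab
  have hthird : ∀ ⦃s⦄, s ∈ B → s ∉ ({a, b} : Set V) → s ∈ deltaHull G {a, b} :=
    fun s hs hsab => by
      simp only [Set.mem_insert_iff, Set.mem_singleton_iff, not_or] at hsab
      exact mem_deltaHull_pair hab' (hB s hs a haB hsab.1) (hB s hs b hbB hsab.2)
  have hcab : c ∉ ({a, b} : Set V) := by simp [Ne.symm hac, Ne.symm hbc]
  have hcS : c ∉ S := fun hcS => hS.notMem_deltaHull hpair hcS hcab (hthird hc hcab)
  have hT : insert c (S \ {a, b}) ⊆ D \ (B \ {c}) :=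
    Set.insert_subset ⟨hcD, fun h => h.2 rfl⟩ fun s hs =>
      ⟨hSD hs.1, fun hsA => hS.notMem_deltaHull hpair hs.1 hs.2 (hthird hsA.1 hs.2)⟩
  have := hm _ hT (hS.insert_diff_pair haS hbS hcS (hthird hc hcab))
  rw [Set.ncard_insert_of_notMem fun h => hcS h.1, Set.ncard_sdiff hpair, Set.ncard_pair hab]
    at this
  have := Set.ncard_le_ncard hpair
  rw [Set.ncard_pair hab] at this
  omega

theorem exists_eq_singleton_of_forall_isBlock_not_subset [Finite V]
    (hbg : ∀ B : Set V, IsBlock G B → CompleteOn G B) (hD : DeltaConvex G D)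
    (hconn : (G.induce D).Connected) (h : ∀ B, IsBlock G B → ¬ B ⊆ D) : ∃ v, D = {v} := by
  obtain ⟨⟨v, hv⟩⟩ := hconn.nonempty
  refine ⟨v, Set.eq_singleton_iff_unique_mem.mpr ⟨hv, fun u hu => by_contra fun huv => ?_⟩⟩
  have : Nontrivial D := ⟨⟨u, hu⟩, ⟨v, hv⟩, fun h => huv (congrArg Subtype.val h)⟩
  obtain ⟨w, huw⟩ := hconn.preconnected.exists_adj_of_nontrivial ⟨u, hu⟩
  have huw : G.Adj u w := huw
  obtain ⟨B, hB, huB, hwB⟩ := exists_isBlock_of_adj huw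
  exact h B hB ((hbg B hB).subset_of_deltaConvex hD huB hwB huw.ne hu w.2)

theorem isGreatest_ncard_radonIndep [Finite V]
    (hbg : ∀ B : Set V, IsBlock G B → CompleteOn G B) (D : Set V) (hD : DeltaConvex G D)
    (hconn : (G.induce D).Connected) :
    IsGreatest {n | ∃ S ⊆ D, RadonIndep G S ∧ S.ncard = n}
      ({B | IsBlock G B ∧ B ⊆ D}.ncard + 1) := by
  by_cases h : ∃ B, IsBlock G B ∧ B ⊆ D
  · obtain ⟨B, c, hL⟩ := exists_isLeafBlock hbg hD h
    obtain ⟨a, haB, hac⟩ := hL.isBlock.exists_ne c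
    have haD : a ∉ D \ (B \ {c}) := fun ha => ha.2 ⟨haB, hac⟩
    have ih := isGreatest_ncard_radonIndep hbg _ (hL.deltaConvex_sdiff hD)
      (hL.connected_induce_sdiff hconn)
    obtain ⟨S, hSD, hS, hScard⟩ := ih.1
    rw [hL.ncard_blocks hbg]
    refine ⟨⟨insert a S, Set.insert_subset (hL.subset haB) (hSD.trans Set.sdiff_subset),
      hS.insert_of_deltaHull_inter hSD (hL.deltaConvex_sdiff hD) haD
        fun T hT => hL.deltaHull_insert_inter_subset hD ⟨haB, hac⟩ hT, ?_⟩, ?_⟩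
    · rw [Set.ncard_insert_of_notMem fun ha => haD (hSD ha), hScard]
    · rintro n ⟨S, hSD, hS, rfl⟩
      exact ncard_le_of_radonIndep_of_completeOn (hbg B hL.isBlock) hL.mem (hL.subset hL.mem)
        (fun S hSD hS => ih.2 ⟨S, hSD, hS, rfl⟩) hSD hS
  · simp only [not_exists, not_and] at h
    obtain ⟨v, rfl⟩ := exists_eq_singleton_of_forall_isBlock_not_subset hbg hD hconn h
    have : {B | IsBlock G B ∧ B ⊆ {v}} = ∅ :=
      Set.eq_empty_of_forall_notMem fun B hB => h B hB.1 hB.2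
    rw [this, Set.ncard_empty]
    refine ⟨⟨{v}, subset_rfl, radonIndep_singleton v, Set.ncard_singleton v⟩, ?_⟩
    rintro n ⟨S, hS, -, rfl⟩
    exact (Set.ncard_le_ncard hS).trans (Set.ncard_singleton v).le
termination_by D.ncard
decreasing_by exact hL.ncard_sdiff_lt

end RadonNumber

/-- If `G` is a finite simple connected block graph (every block complete)
with exactly `ℓ` blocks, then `r_Δ(G) = ℓ + 1`. -/
theorem stmt_16 {V : Type*} [Fintype V] (G : SimpleGraph V) (hconn : G.Connected)
    (hbg : ∀ B : Set V, IsBlock G B → CompleteOn G B)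
    (ℓ : ℕ) (hℓ : {B : Set V | IsBlock G B}.ncard = ℓ) :
    radonNumber G = ℓ + 1 := by
  have h := isGreatest_ncard_radonIndep hbg Set.univ (fun _ _ _ _ _ _ _ _ => Set.mem_univ _)
    ((SimpleGraph.induceUnivIso G).connected_iff.mpr hconn)
  simp only [Set.subset_univ, and_true, true_and] at h
  rw [← hℓ]
  exact h.csSup_eq
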